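/- arXiv:1104.2761 — 2 statements merged into one kernel-verified Lean document; each statement's English description precedes it below -/
import Mathlib

section
/- Let R be a commutative ring and p₁, p₂ prime ideals of R with residue fields k(p_i) = (R/p_i)_{p_i}. Then Tor_n^R(k(p₁), k(p₂)) ≠ 0 for some n ≥ 0 (equivalently k(p₁) ⊗_R^L k(p₂) ≠ 0 in the derived category) if and only if p₁ = p₂. -/
/-!
`Tor_n` is `R`-linear in each variable, so multiplication by `x ∈ R` on
`Tor_n(k(p₁), k(p₂))` is induced both by multiplication by `x` on `k(p₁)` and by
multiplication by `x` on `k(p₂)`. An `x` lying in one of the primes but not in the other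
acts by zero on one residue field and invertibly on the other, hence acts on `Tor_n` both
as zero and as an isomorphism, so `Tor_n` vanishes. Conversely
`Tor_0(k(p), k(p)) = k(p) ⊗_R k(p)` surjects onto `k(p)` by multiplication.
-/

open CategoryTheory

/-- The residue field `k(p) = (R/p)_p` of a commutative ring `R` at a prime
ideal `p`, as an `R`-module (an object of `ModuleCat R`). -/
noncomputable def residueFieldAt (R : Type) [CommRing R] (p : Ideal R) [p.IsPrime] :
    ModuleCat R :=
  ModuleCat.of R (IsLocalRing.ResidueField (Localization.AtPrime p))

open Limits MonoidalCategory

section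

variable {R : Type*} [Semiring R] {C : Type*} [Category C] [Preadditive C] [Linear R C]
  {ι : Type*} {c : ComplexShape ι}

lemma HomologicalComplex.homologyMap_smul {K L : HomologicalComplex C c} (r : R) (φ : K ⟶ L)
    (i : ι) [K.HasHomology i] [L.HasHomology i] :
    homologyMap (r • φ) i = r • homologyMap φ i :=
  ShortComplex.homologyMap_smul ((shortComplexFunctor C c i).map φ) r

instance HomologicalComplex.homologyFunctor_linear [CategoryWithHomology C] (i : ι) :
    (homologyFunctor C c i).Linear R where
  map_smul φ r := homologyMap_smul r φ i

end

section

variable {R : Type*} [Semiring R] {C D : Type*} [Category C] [Category D] [Abelian C]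
  [HasProjectiveResolutions C] [Abelian D] [Linear R D]

instance Functor.leftDerived_linear [Linear R C] (F : C ⥤ D) [F.Additive] [F.Linear R] (n : ℕ) :
    (F.leftDerived n).Linear R where
  map_smul {X Y} f r := by
    obtain ⟨P⟩ := HasProjectiveResolution.out (Z := X)
    obtain ⟨Q⟩ := HasProjectiveResolution.out (Z := Y)
    have comm : (r • P.lift f Q).f 0 ≫ Q.π.f 0 = P.π.f 0 ≫ (r • f) := by
      rw [HomologicalComplex.smul_f_apply, Linear.smul_comp,
        ProjectiveResolution.lift_commutes_zero]
      exact (Linear.comp_smul _ _ _ _ _ _).symm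
    rw [← cancel_mono (Q.isoLeftDerivedObj F n).hom,
      P.isoLeftDerivedObj_hom_naturality _ Q _ comm, Functor.map_smul, Linear.comp_smul,
      ← P.isoLeftDerivedObj_hom_naturality _ Q _ (ProjectiveResolution.lift_commutes_zero f P Q),
      Linear.smul_comp]

lemma NatTrans.leftDerived_smul {F G : C ⥤ D} [F.Additive] [G.Additive] (r : R) (α : F ⟶ G)
    (n : ℕ) : NatTrans.leftDerived (r • α) n = r • NatTrans.leftDerived α n := by
  ext X
  obtain ⟨P⟩ := HasProjectiveResolution.out (Z := X)
  have : (NatTrans.mapHomologicalComplex (r • α) (ComplexShape.down ℕ)).app P.complex =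
      r • (NatTrans.mapHomologicalComplex α _).app P.complex := by
    ext; rfl
  rw [NatTrans.app_smul, P.leftDerived_app_eq, P.leftDerived_app_eq, this, Functor.map_smul,
    Linear.smul_comp, Linear.comp_smul]

end

lemma CategoryTheory.Limits.IsZero.of_smul_id_eq_zero_of_isIso {R : Type*} [Semiring R]
    {C : Type*} [Category C] [Preadditive C] [Linear R C] {X : C} (r : R) (h : r • 𝟙 X = 0)
    [IsIso (r • 𝟙 X)] : IsZero X := by
  rw [IsZero.iff_id_eq_zero]
  exact isIsoZeroSelfEquiv X (h ▸ inferInstance)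

section

variable {R : Type*} [Semiring R] {C : Type*} [Category C] [MonoidalCategory C] [Abelian C]
  [MonoidalPreadditive C] [HasProjectiveResolutions C] [Linear R C] [MonoidalLinear R C]

instance Tor_obj_linear (n : ℕ) (X : C) : ((Tor C n).obj X).Linear R :=
  Functor.leftDerived_linear _ n

lemma Tor_map_smul (n : ℕ) {X X' : C} (r : R) (f : X ⟶ X') :
    (Tor C n).map (r • f) = r • (Tor C n).map f := by
  have : (tensoringLeft C).map (r • f) = r • (tensoringLeft C).map f := by
    ext Y
    exact MonoidalLinear.smul_whiskerRight r f Y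
  rw [Tor_map, this, NatTrans.leftDerived_smul]
  rfl

lemma Tor_smul_id_eq_map_left (n : ℕ) (r : R) (X Y : C) :
    r • 𝟙 (((Tor C n).obj X).obj Y) = ((Tor C n).map (r • 𝟙 X)).app Y := by
  rw [Tor_map_smul, NatTrans.app_smul, CategoryTheory.Functor.map_id, NatTrans.id_app]

lemma Tor_smul_id_eq_map_right (n : ℕ) (r : R) (X Y : C) :
    r • 𝟙 (((Tor C n).obj X).obj Y) = ((Tor C n).obj X).map (r • 𝟙 Y) := by
  rw [Functor.map_smul, CategoryTheory.Functor.map_id]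

lemma isZero_Tor_of_smul_id_eq_zero_left (n : ℕ) (r : R) {X Y : C} (hX : r • 𝟙 X = 0)
    [IsIso (r • 𝟙 Y)] : IsZero (((Tor C n).obj X).obj Y) := by
  have : IsIso (r • 𝟙 (((Tor C n).obj X).obj Y)) := by
    rw [Tor_smul_id_eq_map_right]; infer_instance
  refine .of_smul_id_eq_zero_of_isIso r ?_
  rw [Tor_smul_id_eq_map_left, hX, ← zero_smul R (𝟙 X), Tor_map_smul, zero_smul, NatTrans.app_zero]

lemma isZero_Tor_of_smul_id_eq_zero_right (n : ℕ) (r : R) {X Y : C} [IsIso (r • 𝟙 X)]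
    (hY : r • 𝟙 Y = 0) : IsZero (((Tor C n).obj X).obj Y) := by
  have : IsIso (r • 𝟙 (((Tor C n).obj X).obj Y)) := by
    rw [Tor_smul_id_eq_map_left]; infer_instance
  refine .of_smul_id_eq_zero_of_isIso r ?_
  rw [Tor_smul_id_eq_map_right, hY, ← zero_smul R (𝟙 Y), ← Tor_smul_id_eq_map_right, zero_smul]

lemma isZero_Tor_zero_iff [MonoidalClosed C] (X Y : C) :
    IsZero (((Tor C 0).obj X).obj Y) ↔ IsZero (X ⊗ Y) :=
  (((tensorLeft X).leftDerivedZeroIsoSelf).app Y).isZero_iff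

end

section

universe u

variable {R S : Type u} [CommRing R] [CommRing S] [Algebra R S]

lemma ModuleCat.smul_id_eq_zero_of_algebraMap_eq_zero {x : R} (hx : algebraMap R S x = 0) :
    x • 𝟙 (ModuleCat.of R S) = 0 := by
  ext a
  simp [Algebra.smul_def, hx]

lemma ModuleCat.isIso_smul_id_of_isUnit_algebraMap {x : R} (hx : IsUnit (algebraMap R S x)) :
    IsIso (x • 𝟙 (ModuleCat.of R S)) := by
  rw [ConcreteCategory.isIso_iff_bijective]
  convert hx.unit.mulLeft_bijective using 1
  ext a
  simp [Algebra.smul_def]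

lemma ModuleCat.nontrivial_tensorObj_self [Nontrivial S] :
    Nontrivial (ModuleCat.of R S ⊗ ModuleCat.of R S : ModuleCat R) :=
  Function.Surjective.nontrivial (f := Algebra.TensorProduct.lmul' R (S := S))
    fun s ↦ ⟨s ⊗ₜ 1, by simp⟩

end

section

variable {R : Type} [CommRing R] (p : Ideal R) [p.IsPrime]

lemma residueFieldAt_smul_id_eq_zero {x : R} (hx : x ∈ p) : x • 𝟙 (residueFieldAt R p) = 0 :=
  ModuleCat.smul_id_eq_zero_of_algebraMap_eq_zero (Ideal.algebraMap_residueField_eq_zero.mpr hx)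

lemma isIso_residueFieldAt_smul_id {x : R} (hx : x ∉ p) :
    IsIso (x • 𝟙 (residueFieldAt R p)) :=
  ModuleCat.isIso_smul_id_of_isUnit_algebraMap
    (Ne.isUnit (mt Ideal.algebraMap_residueField_eq_zero.mp hx))

lemma not_isZero_Tor_zero_residueFieldAt :
    ¬ IsZero (((Tor (ModuleCat R) 0).obj (residueFieldAt R p)).obj (residueFieldAt R p)) := by
  rw [isZero_Tor_zero_iff, ModuleCat.isZero_iff_subsingleton, not_subsingleton_iff_nontrivial]
  exact ModuleCat.nontrivial_tensorObj_self

end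

/-- Let `R` be a commutative ring and `p₁, p₂` prime ideals of `R` with residue
fields `k(pᵢ) = (R/pᵢ)_{pᵢ}`.  Then `Tor_n^R(k(p₁), k(p₂)) ≠ 0` for some `n ≥ 0`
(equivalently `k(p₁) ⊗_R^L k(p₂) ≠ 0` in the derived category) if and only if
`p₁ = p₂`. -/
theorem stmt8 (R : Type) [CommRing R] (p₁ p₂ : Ideal R) [p₁.IsPrime] [p₂.IsPrime] :
    (∃ n : ℕ, ¬ Limits.IsZero
        (((Tor (ModuleCat R) n).obj (residueFieldAt R p₁)).obj (residueFieldAt R p₂)))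
      ↔ p₁ = p₂ := by
  refine ⟨fun ⟨n, hn⟩ ↦ ?_, fun h ↦ ⟨0, h ▸ not_isZero_Tor_zero_residueFieldAt p₁⟩⟩
  by_contra hne
  obtain ⟨x, hx₁, hx₂⟩ | ⟨x, hx₂, hx₁⟩ : (∃ x ∈ p₁, x ∉ p₂) ∨ (∃ x ∈ p₂, x ∉ p₁) := by
    simp_rw [← SetLike.not_le_iff_exists, ← not_and_or]
    exact fun h ↦ hne (le_antisymm h.1 h.2)
  · have := isIso_residueFieldAt_smul_id p₂ hx₂
    exact hn (isZero_Tor_of_smul_id_eq_zero_left n x (residueFieldAt_smul_id_eq_zero p₁ hx₁))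
  · have := isIso_residueFieldAt_smul_id p₁ hx₁
    exact hn (isZero_Tor_of_smul_id_eq_zero_right n x (residueFieldAt_smul_id_eq_zero p₂ hx₂))
end

section
/- Let 𝒯 be a tensor triangulated category with arbitrary coproducts, compactly generated by the shifts of its unit 𝟙, such that Hom(Σ^n 𝟙, 𝟙) = 0 for n ≠ 0 and F := End(𝟙) is a field. Then every object of 𝒯 is isomorphic to a coproduct of shifts of 𝟙, and the functor X ↦ π_*(X) = Hom(Σ^* 𝟙, X) is an equivalence between 𝒯 and the category of ℤ-graded F-vector spaces. -/
/-!
Write `π_n X = Hom(𝟙⟦n⟧, X)`, an `F`-vector space through `End 𝟙 ≅ F`. Since `𝟙`, hence each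
`𝟙⟦n⟧`, is compact and `Hom(𝟙⟦n⟧, 𝟙⟦m⟧)` is `F` for `m = n` and `0` otherwise, the inclusions of
the summands with `m = n` form a basis of `π_n (∐_{(m, k)} 𝟙⟦m⟧)`. Choosing a basis of every
`π_n X` therefore gives a map `∐ 𝟙⟦n⟧ ⟶ X` that is bijective on all `π_n`; by the long exact
sequence its cone has vanishing `π_*`, so the cone is zero because the shifts of `𝟙` generate,
and the map is an isomorphism. On such coproducts, morphisms and graded linear maps are both
freely determined by their values on the summands, so `π_*` is fully faithful; realising a
graded basis by a coproduct of shifts makes it essentially surjective.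
-/

open CategoryTheory Limits Pretriangulated MonoidalCategory DirectSum

universe v u

lemma DFinsupp.coe_basis {ι R : Type*} {M : ι → Type*} [Semiring R]
    [∀ i, AddCommMonoid (M i)] [∀ i, Module R (M i)] [DecidableEq ι] {η : ι → Type*}
    (b : ∀ i, Module.Basis (η i) R (M i)) :
    ⇑(DFinsupp.basis b) = fun ix => DFinsupp.single ix.1 (b ix.1 ix.2) := by
  ext ⟨i, x⟩ : 1
  simp [DFinsupp.basis]

namespace CategoryTheory

section

variable {C : Type u} [Category.{v} C]

lemma injective_comp_map {D : Type*} [Category D] (G : C ⥤ D) [G.Full] [G.Faithful]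
    {A X Y : C} (f : X ⟶ Y) (hf : Function.Injective fun g : A ⟶ X => g ≫ f) :
    Function.Injective fun g : G.obj A ⟶ G.obj X => g ≫ G.map f := by
  intro g g' h
  obtain ⟨g, rfl⟩ := G.map_surjective g
  obtain ⟨g', rfl⟩ := G.map_surjective g'
  simp only [← G.map_comp] at h
  rw [hf (G.map_injective h)]

lemma injective_comp_of_iso {A B X Y : C} (i : A ≅ B) (f : X ⟶ Y)
    (hf : Function.Injective fun g : A ⟶ X => g ≫ f) :
    Function.Injective fun g : B ⟶ X => g ≫ f := fun g g' h =>
  (cancel_epi i.hom).1 (hf (by simpa using congrArg (i.hom ≫ ·) h))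

end

variable {C : Type u} [Category.{v} C] [Preadditive C]

def IsCoproductCompact [HasCoproducts.{v} C] (U : C) : Prop :=
  ∀ (ι : Type v) [DecidableEq ι] (g : ι → C),
    Function.Bijective (toAddMonoid fun i => Preadditive.rightComp U (Sigma.ι g i) :
      (⨁ i, (U ⟶ g i)) →+ (U ⟶ ∐ g))

lemma IsCoproductCompact.of_adjunction {D : Type*} [Category.{v} D] [Preadditive D]
    [HasCoproducts.{v} C] [HasCoproducts.{v} D]
    {L : C ⥤ D} {R : D ⥤ C} (adj : L ⊣ R) [L.Additive] [PreservesColimitsOfSize.{v, v} R]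
    {U : C} (hU : IsCoproductCompact U) : IsCoproductCompact (L.obj U) := by
  intro ι _ g
  let E : (⨁ i, (L.obj U ⟶ g i)) ≃+ (⨁ i, (U ⟶ R.obj (g i))) :=
    DFinsupp.mapRange.addEquiv fun i => adj.homAddEquiv U (g i)
  -- through the adjunction, the comparison map of `L.obj U` is that of `U` followed by the
  -- isomorphism `∐ (R ∘ g) ≅ R (∐ g)`
  have key : ∀ v, (toAddMonoid fun i => Preadditive.rightComp (L.obj U) (Sigma.ι g i)) v =
      (adj.homAddEquiv _ _).symm
        ((toAddMonoid fun i => Preadditive.rightComp U (Sigma.ι (fun i => R.obj (g i)) i)) (E v) ≫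
          sigmaComparison R g) := by
    refine fun v => (adj.homAddEquiv _ _).injective ?_
    rw [AddEquiv.apply_symm_apply]
    induction v using DirectSum.induction_on with
    | zero => simp
    | of i x =>
      have hE : E (of _ i x) = of _ i (adj.homEquiv U _ x) :=
        DFinsupp.mapRange_single (hf := fun _ => map_zero _)
      rw [hE, toAddMonoid_of, toAddMonoid_of]
      change adj.homEquiv _ _ (x ≫ Sigma.ι g i) =
        (adj.homEquiv _ _ x ≫ Sigma.ι (fun i => R.obj (g i)) i) ≫ _
      rw [Category.assoc, ι_comp_sigmaComparison, Adjunction.homEquiv_naturality_right]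
    | add v w hv hw =>
      rw [map_add, map_add, map_add, map_add, Preadditive.add_comp, hv, hw]
  have : (toAddMonoid fun i => Preadditive.rightComp (L.obj U) (Sigma.ι g i) :
      (⨁ i, (L.obj U ⟶ g i)) →+ (L.obj U ⟶ ∐ g)) =
      (adj.homAddEquiv _ _).symm ∘ (asIso (sigmaComparison R g)).homToEquiv ∘
        (toAddMonoid fun i => Preadditive.rightComp U (Sigma.ι (fun i => R.obj (g i)) i)) ∘ E :=
    funext key
  rw [this]
  exact (adj.homAddEquiv _ _).symm.bijective.comp
    ((Equiv.bijective _).comp ((hU ι _).comp E.bijective))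

lemma IsCoproductCompact.shift [HasCoproducts.{v} C] [HasShift C ℤ]
    [∀ n : ℤ, (shiftFunctor C n).Additive] {U : C} (hU : IsCoproductCompact U) (n : ℤ) :
    IsCoproductCompact (U⟦n⟧) :=
  hU.of_adjunction (L := shiftFunctor C n) (shiftEquiv C n).toAdjunction

section GradedHom

variable [HasShift C ℤ] [∀ n : ℤ, (shiftFunctor C n).Additive]
  {R : Type*} [CommRing R] {U : C} (φ : R →+* End U)

def shiftScalars (n : ℤ) : R →+* (End (U⟦n⟧))ᵐᵒᵖ :=
  RingHom.toOpposite
    { toFun r := (φ r)⟦n⟧'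
      map_one' := by simp [End.one_def]
      map_mul' r s := by simp [End.mul_def]
      map_zero' := by simp
      map_add' r s := by rw [map_add]; exact Functor.map_add _ }
    fun r s => by
      change (φ s)⟦n⟧' ≫ (φ r)⟦n⟧' = (φ r)⟦n⟧' ≫ (φ s)⟦n⟧'
      rw [← Functor.map_comp, ← Functor.map_comp, ← End.mul_def, ← End.mul_def, ← map_mul,
        ← map_mul, mul_comm]

noncomputable def gradedHom : C ⥤ Discrete ℤ ⥤ ModuleCat R :=
  (Discrete.functor fun n => preadditiveCoyonedaObj (U⟦n⟧) ⋙
    ModuleCat.restrictScalars (shiftScalars φ n)).flip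

variable {φ}

lemma gradedHom_smul {X : C} {n : ℤ} (r : R) (f : ((gradedHom φ).obj X).obj ⟨n⟩) :
    r • f = (φ r)⟦n⟧' ≫ (f : U⟦n⟧ ⟶ X) := rfl

variable [HasCoproducts.{v} C]

noncomputable def gradedHomCoprodEquiv (hU : IsCoproductCompact U) (n : ℤ) {ι : Type v}
    [DecidableEq ι] (g : ι → C) :
    (⨁ i, ((gradedHom φ).obj (g i)).obj ⟨n⟩) ≃ₗ[R] ((gradedHom φ).obj (∐ g)).obj ⟨n⟩ :=
  LinearEquiv.ofBijective
    (toModule R ι _ fun i => (((gradedHom φ).map (Sigma.ι g i)).app ⟨n⟩).hom) (hU.shift n ι g)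

lemma gradedHomCoprodEquiv_lof (hU : IsCoproductCompact U) (n : ℤ) {ι : Type v}
    [DecidableEq ι] (g : ι → C) (i : ι) (x : ((gradedHom φ).obj (g i)).obj ⟨n⟩) :
    gradedHomCoprodEquiv hU n g (lof R ι _ i x) = (x : U⟦n⟧ ⟶ g i) ≫ Sigma.ι g i :=
  toModule_lof ..

variable (φ) in
noncomputable def basisSigmaDesc {X : C} {κ : ℤ → Type v}
    (b : ∀ n, Module.Basis (κ n) R (((gradedHom φ).obj X).obj ⟨n⟩)) :
    (∐ fun i : Σ m, κ m => U⟦i.1⟧) ⟶ X :=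
  Limits.Sigma.desc (f := fun i : Σ m, κ m => U⟦i.1⟧) fun i => b i.1 i.2

lemma ι_basisSigmaDesc {X : C} {κ : ℤ → Type v}
    (b : ∀ n, Module.Basis (κ n) R (((gradedHom φ).obj X).obj ⟨n⟩)) (n : ℤ) (k : κ n) :
    Sigma.ι (fun i : Σ m, κ m => U⟦i.1⟧) ⟨n, k⟩ ≫ basisSigmaDesc φ b = b n k :=
  Limits.Sigma.ι_desc _ _

end GradedHom

section GradedField

variable [HasShift C ℤ] {U : C}

lemma exists_shift_map_eq {R : Type*} [Semiring R] (e : R ≃+* End U) {n : ℤ}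
    (x : U⟦n⟧ ⟶ U⟦n⟧) : ∃ r : R, (e r)⟦n⟧' = x := by
  obtain ⟨y, rfl⟩ := (shiftFunctor C n).map_surjective x
  exact ⟨e.symm y, by simp⟩

variable [∀ n : ℤ, (shiftFunctor C n).Additive]

lemma shift_hom_eq_zero_of_ne (hconc : ∀ n : ℤ, n ≠ 0 → ∀ f : U⟦n⟧ ⟶ U, f = 0) {n m : ℤ}
    (h : n ≠ m) (x : U⟦n⟧ ⟶ U⟦m⟧) : x = 0 := by
  apply (shiftFunctor C (-m)).map_injective
  have := hconc (n - m) (sub_ne_zero.2 h)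
    ((shiftFunctorAdd' C n (-m) (n - m) (by omega)).hom.app U ≫ x⟦-m⟧' ≫
      (shiftFunctorCompIsoId C m (-m) (by omega)).hom.app U)
  simpa using this

lemma id_shift_ne_zero [Nontrivial (End U)] (n : ℤ) : 𝟙 (U⟦n⟧) ≠ 0 := fun h =>
  one_ne_zero (α := End U) ((shiftFunctor C n).map_injective (by simpa [End.one_def] using h))

variable {F : Type*} [Field F] (e : F ≃+* End U)
  (hconc : ∀ n : ℤ, n ≠ 0 → ∀ f : U⟦n⟧ ⟶ U, f = 0)

noncomputable def basisGradedHomShift (n m : ℤ) :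
    Module.Basis (PLift (m = n)) F (((gradedHom (e : F →+* End U)).obj (U⟦m⟧)).obj ⟨n⟩) :=
  Module.Basis.mk (v := fun h => eqToHom (by rw [h.down]))
    (by
      refine (linearIndependent_subsingleton_index_iff _).2 fun ⟨h⟩ => ?_
      subst h
      have := e.symm.toEquiv.nontrivial
      exact id_shift_ne_zero m)
    (by
      intro x _
      by_cases h : m = n
      · subst h
        obtain ⟨r, rfl⟩ := exists_shift_map_eq e x
        have hx : ((e r)⟦m⟧' : ((gradedHom (e : F →+* End U)).obj (U⟦m⟧)).obj ⟨m⟩) =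
            r • (show ((gradedHom (e : F →+* End U)).obj (U⟦m⟧)).obj ⟨m⟩ from 𝟙 _) := by
          rw [gradedHom_smul]
          simp
        rw [hx]
        exact Submodule.smul_mem _ r (Submodule.subset_span ⟨⟨rfl⟩, rfl⟩)
      · rw [shift_hom_eq_zero_of_ne hconc (Ne.symm h) x]
        exact zero_mem _)

lemma basisGradedHomShift_apply (n m : ℤ) (h : PLift (m = n)) :
    basisGradedHomShift e hconc n m h = eqToHom (by rw [h.down]) :=
  Module.Basis.mk_apply ..

variable [HasCoproducts.{v} C] (hU : IsCoproductCompact U)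

open scoped Classical in
noncomputable def basisGradedHomSigma (κ : ℤ → Type v) (n : ℤ) :
    Module.Basis (κ n) F
      (((gradedHom (e : F →+* End U)).obj (∐ fun i : Σ m, κ m => U⟦i.1⟧)).obj ⟨n⟩) :=
  ((DFinsupp.basis fun i : Σ m, κ m => basisGradedHomShift e hconc n i.1).map
    (gradedHomCoprodEquiv hU n _)).reindex
      ((Equiv.sigmaPLiftEquivSubtype _).trans (Equiv.sigmaSubtype n))

lemma basisGradedHomSigma_apply (κ : ℤ → Type v) (n : ℤ) (k : κ n) :
    basisGradedHomSigma e hconc hU κ n k = Sigma.ι (fun i : Σ m, κ m => U⟦i.1⟧) ⟨n, k⟩ := by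
  classical
  rw [basisGradedHomSigma, Module.Basis.reindex_apply, Module.Basis.map_apply,
    DFinsupp.coe_basis]
  refine (gradedHomCoprodEquiv_lof ..).trans ?_
  rw [basisGradedHomShift_apply]
  exact Category.id_comp _

include hconc hU in
lemma exists_gradedHom_obj_iso (M : Discrete ℤ ⥤ ModuleCat.{v} F) :
    ∃ X : C, Nonempty ((gradedHom (e : F →+* End U)).obj X ≅ M) :=
  ⟨∐ fun i : Σ n, Module.Basis.ofVectorSpaceIndex F (M.obj ⟨n⟩) => U⟦i.1⟧,
    ⟨Discrete.natIso fun ⟨n⟩ => ((basisGradedHomSigma e hconc hU _ n).equiv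
      (Module.Basis.ofVectorSpace F (M.obj ⟨n⟩)) (Equiv.refl _)).toModuleIso⟩⟩

end GradedField

section Triangulated

variable [HasZeroObject C] [HasShift C ℤ] [∀ n : ℤ, (shiftFunctor C n).Additive]
  [Pretriangulated C] {U : C}

lemma isIso_of_bijective_comp (hgen : ∀ X : C, (∀ (n : ℤ) (f : U⟦n⟧ ⟶ X), f = 0) → IsZero X)
    {X Y : C} (f : X ⟶ Y) (hf : ∀ n : ℤ, Function.Bijective fun g : U⟦n⟧ ⟶ X => g ≫ f) :
    IsIso f := by
  obtain ⟨Z, g, h, hT⟩ := distinguished_cocone_triangle f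
  refine (Triangle.isZero₃_iff_isIso₁ _ hT).1 (hgen Z fun n z => ?_)
  have hinj : Function.Injective fun w : U⟦n⟧ ⟶ X⟦(1 : ℤ)⟧ => w ≫ f⟦(1 : ℤ)⟧' :=
    injective_comp_of_iso ((shiftFunctorAdd' C (n - 1) 1 n (by omega)).app U).symm _
      (injective_comp_map (shiftFunctor C (1 : ℤ)) f (hf (n - 1)).1)
  have h₃₁ : h ≫ f⟦(1 : ℤ)⟧' = 0 := comp_distTriang_mor_zero₃₁ _ hT
  have h₁₂ : f ≫ g = 0 := comp_distTriang_mor_zero₁₂ _ hT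
  have hzh : z ≫ h = 0 := hinj (by simp [h₃₁])
  obtain ⟨y, rfl⟩ := Triangle.coyoneda_exact₃ _ hT z hzh
  obtain ⟨x, rfl⟩ := (hf n).2 y
  exact (Category.assoc x f g).trans (by rw [h₁₂, Limits.comp_zero])

variable [HasCoproducts.{v} C] {F : Type*} [Field F] (e : F ≃+* End U)
  (hconc : ∀ n : ℤ, n ≠ 0 → ∀ f : U⟦n⟧ ⟶ U, f = 0) (hU : IsCoproductCompact U)
  (hgen : ∀ X : C, (∀ (n : ℤ) (f : U⟦n⟧ ⟶ X), f = 0) → IsZero X)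

include e hconc hU hgen

lemma isIso_basisSigmaDesc {X : C} {κ : ℤ → Type v}
    (b : ∀ n, Module.Basis (κ n) F (((gradedHom (e : F →+* End U)).obj X).obj ⟨n⟩)) :
    IsIso (basisSigmaDesc (e : F →+* End U) b) := by
  refine isIso_of_bijective_comp hgen _ fun n => ?_
  have : (((gradedHom (e : F →+* End U)).map (basisSigmaDesc (e : F →+* End U) b)).app ⟨n⟩).hom =
      ((basisGradedHomSigma e hconc hU κ n).equiv (b n) (Equiv.refl _)).toLinearMap :=
    (basisGradedHomSigma e hconc hU κ n).ext fun k => by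
      rw [LinearEquiv.coe_coe, Module.Basis.equiv_apply, Equiv.refl_apply,
        basisGradedHomSigma_apply]
      exact ι_basisSigmaDesc b n k
  change Function.Bijective
    (((gradedHom (e : F →+* End U)).map (basisSigmaDesc (e : F →+* End U) b)).app ⟨n⟩).hom
  rw [this]
  exact LinearEquiv.bijective _

lemma exists_iso_sigma_shift (X : C) :
    ∃ (ι : Type v) (d : ι → ℤ), Nonempty (X ≅ ∐ fun i => U⟦d i⟧) := by
  let b n := Module.Basis.ofVectorSpace F (((gradedHom (e : F →+* End U)).obj X).obj ⟨n⟩)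
  have := isIso_basisSigmaDesc e hconc hU hgen b
  exact ⟨_, Sigma.fst, ⟨(asIso (basisSigmaDesc (e : F →+* End U) b)).symm⟩⟩

lemma gradedHom_map_injective {X Y : C} {f f' : X ⟶ Y}
    (h : (gradedHom (e : F →+* End U)).map f = (gradedHom (e : F →+* End U)).map f') :
    f = f' := by
  let b n := Module.Basis.ofVectorSpace F (((gradedHom (e : F →+* End U)).obj X).obj ⟨n⟩)
  have := isIso_basisSigmaDesc e hconc hU hgen b
  refine (cancel_epi (basisSigmaDesc (e : F →+* End U) b)).1 (Sigma.hom_ext _ _ fun ⟨n, k⟩ => ?_)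
  rw [← Category.assoc, ← Category.assoc, ι_basisSigmaDesc]
  exact congr((($h).app ⟨n⟩).hom (b n k))

lemma gradedHom_map_surjective {X Y : C}
    (η : (gradedHom (e : F →+* End U)).obj X ⟶ (gradedHom (e : F →+* End U)).obj Y) :
    ∃ f : X ⟶ Y, (gradedHom (e : F →+* End U)).map f = η := by
  let b n := Module.Basis.ofVectorSpace F (((gradedHom (e : F →+* End U)).obj X).obj ⟨n⟩)
  have := isIso_basisSigmaDesc e hconc hU hgen b
  refine ⟨inv (basisSigmaDesc (e : F →+* End U) b) ≫
    Limits.Sigma.desc (f := fun i : Σ m, _ => U⟦i.1⟧) fun i => (η.app ⟨i.1⟩).hom (b i.1 i.2), ?_⟩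
  ext ⟨n⟩ : 2
  refine ModuleCat.hom_ext ((b n).ext fun k => ?_)
  have hb := (IsIso.comp_inv_eq _).2 (ι_basisSigmaDesc b n k).symm
  exact (Category.assoc _ _ _).symm.trans ((congrArg (· ≫ _) hb).trans (Limits.Sigma.ι_desc _ _))

lemma isEquivalence_gradedHom : (gradedHom (e : F →+* End U)).IsEquivalence where
  faithful := ⟨gradedHom_map_injective e hconc hU hgen⟩
  full := ⟨fun η => gradedHom_map_surjective e hconc hU hgen η⟩
  essSurj := ⟨exists_gradedHom_obj_iso e hconc hU⟩

end Triangulated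

end CategoryTheory

/-- Let `𝒯` be a tensor triangulated category with arbitrary coproducts,
compactly generated by the shifts of its unit `𝟙` (i.e. `𝟙` is compact:
`Hom(𝟙, −)` commutes with coproducts, and `X = 0` iff `Hom(Σⁿ𝟙, X) = 0` for
all `n`), such that `Hom(Σⁿ𝟙, 𝟙) = 0` for `n ≠ 0` and `F := End 𝟙` is a field.
Then every object of `𝒯` is isomorphic to a coproduct of shifts of `𝟙`, and
the functor `X ↦ π_*(X) = Hom(Σ^*𝟙, X)` is an equivalence between `𝒯` and the
category of `ℤ`-graded `F`-vector spaces. -/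
theorem stmt17 {C : Type u} [Category.{0} C] [HasZeroObject C] [Preadditive C]
    [HasShift C ℤ] [∀ n : ℤ, (shiftFunctor C n).Additive] [Pretriangulated C]
    [MonoidalCategory C] [SymmetricCategory C] [MonoidalPreadditive C]
    [HasCoproducts.{0} C]
    -- the unit is a compact object
    (hcompact : ∀ (ι : Type) [DecidableEq ι] (g : ι → C),
      Function.Bijective
        (⇑(DirectSum.toAddMonoid
            (fun i => Preadditive.rightComp (𝟙_ C) (Sigma.ι g i)) :
          (⨁ i : ι, ((𝟙_ C) ⟶ g i)) →+ ((𝟙_ C) ⟶ ∐ g))))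
    -- the shifts of the unit generate
    (hgen : ∀ X : C, (∀ (n : ℤ) (f : (𝟙_ C)⟦n⟧ ⟶ X), f = 0) → IsZero X)
    -- the graded endomorphism ring of the unit is concentrated in degree zero
    (hconc : ∀ n : ℤ, n ≠ 0 → ∀ f : (𝟙_ C)⟦n⟧ ⟶ 𝟙_ C, f = 0)
    -- `F := End 𝟙` is a field
    (F : Type) [Field F] (e : F ≃+* End (𝟙_ C)) :
    (∀ X : C, ∃ (ι : Type) (d : ι → ℤ),
        Nonempty (X ≅ ∐ fun i : ι => (𝟙_ C)⟦d i⟧)) ∧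
      ∃ E : C ≌ (Discrete ℤ ⥤ ModuleCat F),
        ∀ (X : C) (i : ℤ),
          Nonempty ((((E.functor.obj X).obj ⟨i⟩ : ModuleCat F) : Type) ≃
            ((𝟙_ C)⟦i⟧ ⟶ X)) := by
  have := isEquivalence_gradedHom e hconc hcompact hgen
  exact ⟨exists_iso_sigma_shift e hconc hcompact hgen,
    (gradedHom (e : F →+* End (𝟙_ C))).asEquivalence, fun _ _ => ⟨Equiv.refl _⟩⟩
end
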